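/- Fix an integer n ≥ 4. Define C₀ ⊆ (ℝⁿ×ℝⁿ) × (ℝ^{n−1}×ℝ^{n−1}) as the set of pairs ((x, ξ), (y, η)) such that for some θ'' = (θ₁, …, θ_{n−2}) with θ₁ ≠ 0: ξ_i = θ_i for 1 ≤ i ≤ n−2, ξ_{n−1} = −2x_{n−1}y_{n−1}θ₁, ξ_n = (y_{n−1}² + 2x_n y_{n−1})θ₁, η_i = θ_i for 1 ≤ i ≤ n−2, η_{n−1} = −(2x_n y_{n−1} + x_n² − x_{n−1}²)θ₁, x_i = y_i for 2 ≤ i ≤ n−2, and x₁ − y₁ + (x_n² − x_{n−1}²)y_{n−1} + x_n y_{n−1}² = 0. Define the composition C₀ᵗ∘C₀ = {((x, ξ), (y, η)) ∈ (ℝ^{n−1}×ℝ^{n−1})² : ∃(z, ζ) ∈ ℝⁿ×ℝⁿ with ((z, ζ), (x, ξ)) ∈ C₀ and ((z, ζ), (y, η)) ∈ C₀}. Let Δ = {((x, ξ), (x, ξ))} be the diagonal, and let C̃₀ be the set of ((x, ξ), (y, η)) with x_i = y_i for 2 ≤ i ≤ n−2, ξ_i = η_i for 1 ≤ i ≤ n−2,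 ξ_{n−1} = (x_{n−1}+y_{n−1})(3x_{n−1}−y_{n−1})ξ₁/4, η_{n−1} = (x_{n−1}+y_{n−1})(3y_{n−1}−x_{n−1})ξ₁/4, and x₁ − y₁ + (x_{n−1}+y_{n−1})²(x_{n−1}−y_{n−1})/4 = 0. Then C₀ᵗ∘C₀ ⊆ Δ ∪ C̃₀. -/
import Mathlib


/-- Membership in the model folded cross cap canonical relation
`C₀ ⊆ (ℝⁿ×ℝⁿ) × (ℝ^{n-1}×ℝ^{n-1})`: `z = (x, ξ)` and `q = (y, η)` are related iff for
some `θ'' = (θ₁, …, θ_{n-2})` with `θ₁ ≠ 0` (indices shifted down by one):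
`ξ_i = θ_i (1 ≤ i ≤ n-2)`, `ξ_{n-1} = -2x_{n-1}y_{n-1}θ₁`,
`ξ_n = (y_{n-1}² + 2x_n y_{n-1})θ₁`, `η_i = θ_i (1 ≤ i ≤ n-2)`,
`η_{n-1} = -(2x_n y_{n-1} + x_n² - x_{n-1}²)θ₁`, `x_i = y_i (2 ≤ i ≤ n-2)`, and
`x₁ - y₁ + (x_n² - x_{n-1}²)y_{n-1} + x_n y_{n-1}² = 0`. -/
def memC0 (n : ℕ) (hn : 4 ≤ n) (z : (Fin n → ℝ) × (Fin n → ℝ))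
    (q : (Fin (n - 1) → ℝ) × (Fin (n - 1) → ℝ)) : Prop :=
  ∃ θ : Fin (n - 2) → ℝ,
    θ ⟨0, by omega⟩ ≠ 0 ∧
    (∀ i : Fin (n - 2), z.2 ⟨(i : ℕ), by have := i.isLt; omega⟩ = θ i) ∧
    z.2 ⟨n - 2, by omega⟩ =
      -2 * z.1 ⟨n - 2, by omega⟩ * q.1 ⟨n - 2, by omega⟩ * θ ⟨0, by omega⟩ ∧
    z.2 ⟨n - 1, by omega⟩ =
      ((q.1 ⟨n - 2, by omega⟩) ^ 2 +
        2 * z.1 ⟨n - 1, by omega⟩ * q.1 ⟨n - 2, by omega⟩) * θ ⟨0, by omega⟩ ∧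
    (∀ i : Fin (n - 2), q.2 ⟨(i : ℕ), by have := i.isLt; omega⟩ = θ i) ∧
    q.2 ⟨n - 2, by omega⟩ =
      -(2 * z.1 ⟨n - 1, by omega⟩ * q.1 ⟨n - 2, by omega⟩ +
          (z.1 ⟨n - 1, by omega⟩) ^ 2 - (z.1 ⟨n - 2, by omega⟩) ^ 2) * θ ⟨0, by omega⟩ ∧
    (∀ i : ℕ, ∀ h1 : 1 ≤ i, ∀ h2 : i ≤ n - 3,
      z.1 ⟨i, by omega⟩ = q.1 ⟨i, by omega⟩) ∧
    z.1 ⟨0, by omega⟩ - q.1 ⟨0, by omega⟩ +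
      ((z.1 ⟨n - 1, by omega⟩) ^ 2 - (z.1 ⟨n - 2, by omega⟩) ^ 2) * q.1 ⟨n - 2, by omega⟩ +
      z.1 ⟨n - 1, by omega⟩ * (q.1 ⟨n - 2, by omega⟩) ^ 2 = 0

/-- Membership in the two-sided fold `C̃₀ ⊆ (ℝ^{n-1}×ℝ^{n-1})²`:
`(x, ξ)` and `(y, η)` are related iff `x_i = y_i (2 ≤ i ≤ n-2)`,
`ξ_i = η_i (1 ≤ i ≤ n-2)`, `ξ_{n-1} = (x_{n-1}+y_{n-1})(3x_{n-1}-y_{n-1})ξ₁/4`,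
`η_{n-1} = (x_{n-1}+y_{n-1})(3y_{n-1}-x_{n-1})ξ₁/4`, and
`x₁ - y₁ + (x_{n-1}+y_{n-1})²(x_{n-1}-y_{n-1})/4 = 0`. -/
def memCt (n : ℕ) (hn : 4 ≤ n)
    (q r : (Fin (n - 1) → ℝ) × (Fin (n - 1) → ℝ)) : Prop :=
  (∀ i : ℕ, ∀ h1 : 1 ≤ i, ∀ h2 : i ≤ n - 3,
    q.1 ⟨i, by omega⟩ = r.1 ⟨i, by omega⟩) ∧
  (∀ i : Fin (n - 2), q.2 ⟨(i : ℕ), by have := i.isLt; omega⟩ =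
    r.2 ⟨(i : ℕ), by have := i.isLt; omega⟩) ∧
  q.2 ⟨n - 2, by omega⟩ =
    (q.1 ⟨n - 2, by omega⟩ + r.1 ⟨n - 2, by omega⟩) *
      (3 * q.1 ⟨n - 2, by omega⟩ - r.1 ⟨n - 2, by omega⟩) * q.2 ⟨0, by omega⟩ / 4 ∧
  r.2 ⟨n - 2, by omega⟩ =
    (q.1 ⟨n - 2, by omega⟩ + r.1 ⟨n - 2, by omega⟩) *
      (3 * r.1 ⟨n - 2, by omega⟩ - q.1 ⟨n - 2, by omega⟩) * q.2 ⟨0, by omega⟩ / 4 ∧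
  q.1 ⟨0, by omega⟩ - r.1 ⟨0, by omega⟩ +
    (q.1 ⟨n - 2, by omega⟩ + r.1 ⟨n - 2, by omega⟩) ^ 2 *
      (q.1 ⟨n - 2, by omega⟩ - r.1 ⟨n - 2, by omega⟩) / 4 = 0

/-- the composition `C₀ᵗ ∘ C₀` is contained in the union of the diagonal
`Δ` and the two-sided fold `C̃₀`. -/
theorem stmt_12 (n : ℕ) (hn : 4 ≤ n) :
    {qr : ((Fin (n - 1) → ℝ) × (Fin (n - 1) → ℝ)) ×
        ((Fin (n - 1) → ℝ) × (Fin (n - 1) → ℝ)) |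
      ∃ z : (Fin n → ℝ) × (Fin n → ℝ), memC0 n hn z qr.1 ∧ memC0 n hn z qr.2} ⊆
    {qr | qr.1 = qr.2} ∪ {qr | memCt n hn qr.1 qr.2} := by
  rintro ⟨q, r⟩ ⟨z, hq, hr⟩
  obtain ⟨θ, hc, hξ, hξa, hξb, hη, hηn, hxy, hph⟩ := hq
  obtain ⟨θ', hc', hξ', hξa', hξb', hμ, hμn, hxw, hph'⟩ := hr
  have hθeq : θ = θ' := by
    funext i
    rw [← hξ i, hξ' i]
  subst hθeq
  -- abbreviations
  have h1 := hξa.symm.trans hξa'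
  have h2 : z.1 ⟨n - 2, by omega⟩ * q.1 ⟨n - 2, by omega⟩ =
      z.1 ⟨n - 2, by omega⟩ * r.1 ⟨n - 2, by omega⟩ := by
    have := mul_right_cancel₀ hc h1
    linear_combination (-1 / 2 : ℝ) * this
  have h3 : (q.1 ⟨n - 2, by omega⟩) ^ 2 +
        2 * z.1 ⟨n - 1, by omega⟩ * q.1 ⟨n - 2, by omega⟩ =
      (r.1 ⟨n - 2, by omega⟩) ^ 2 +
        2 * z.1 ⟨n - 1, by omega⟩ * r.1 ⟨n - 2, by omega⟩ :=
    mul_right_cancel₀ hc (hξb.symm.trans hξb')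
  by_cases hst : q.1 ⟨n - 2, (by omega : n - 2 < n - 1)⟩ =
      r.1 ⟨n - 2, (by omega : n - 2 < n - 1)⟩
  · -- diagonal case
    left
    have h0 : q.1 ⟨0, (by omega : 0 < n - 1)⟩ = r.1 ⟨0, (by omega : 0 < n - 1)⟩ := by
      linear_combination (-1 : ℝ) * hph + hph' +
        ((z.1 ⟨n - 1, by omega⟩) ^ 2 - (z.1 ⟨n - 2, by omega⟩) ^ 2 +
          z.1 ⟨n - 1, by omega⟩ *
            (q.1 ⟨n - 2, (by omega : n - 2 < n - 1)⟩ +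
              r.1 ⟨n - 2, (by omega : n - 2 < n - 1)⟩)) * hst
    have hsnd : q.2 ⟨n - 2, (by omega : n - 2 < n - 1)⟩ =
        r.2 ⟨n - 2, (by omega : n - 2 < n - 1)⟩ := by
      linear_combination hηn - hμn +
        (-2 * z.1 ⟨n - 1, by omega⟩ * θ ⟨0, by omega⟩) * hst
    show q = r
    refine Prod.ext ?_ ?_ <;> funext i <;> rcases i with ⟨i, hi⟩
    · rcases Nat.eq_zero_or_pos i with h | h
      · subst h; exact h0
      · by_cases hle : i ≤ n - 3
        · exact (hxy i h hle).symm.trans (hxw i h hle)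
        · have : i = n - 2 := by omega
          subst this; exact hst
    · by_cases hle : i < n - 2
      · exact (hη ⟨i, hle⟩).trans (hμ ⟨i, hle⟩).symm
      · have : i = n - 2 := by omega
        subst this; exact hsnd
  · -- fold case
    right
    have hsub : q.1 ⟨n - 2, (by omega : n - 2 < n - 1)⟩ -
        r.1 ⟨n - 2, (by omega : n - 2 < n - 1)⟩ ≠ 0 := sub_ne_zero_of_ne hst
    have ha : z.1 ⟨n - 2, (by omega : n - 2 < n)⟩ = 0 := by
      rcases mul_eq_zero.1 (show z.1 ⟨n - 2, (by omega : n - 2 < n)⟩ *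
          (q.1 ⟨n - 2, (by omega : n - 2 < n - 1)⟩ -
            r.1 ⟨n - 2, (by omega : n - 2 < n - 1)⟩) = 0 by linear_combination h2) with
        h | h
      · exact h
      · exact absurd h hsub
    have hb : q.1 ⟨n - 2, (by omega : n - 2 < n - 1)⟩ +
        r.1 ⟨n - 2, (by omega : n - 2 < n - 1)⟩ +
        2 * z.1 ⟨n - 1, (by omega : n - 1 < n)⟩ = 0 := by
      rcases mul_eq_zero.1 (show (q.1 ⟨n - 2, (by omega : n - 2 < n - 1)⟩ -
          r.1 ⟨n - 2, (by omega : n - 2 < n - 1)⟩) *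
          (q.1 ⟨n - 2, (by omega : n - 2 < n - 1)⟩ +
            r.1 ⟨n - 2, (by omega : n - 2 < n - 1)⟩ +
            2 * z.1 ⟨n - 1, (by omega : n - 1 < n)⟩) = 0 by linear_combination h3) with
        h | h
      · exact absurd h hsub
      · exact h
    have hq0 : q.2 ⟨0, (by omega : 0 < n - 1)⟩ = θ ⟨0, (by omega : 0 < n - 2)⟩ :=
      hη ⟨0, by omega⟩
    refine ⟨fun i hi1 hi2 => (hxy i hi1 hi2).symm.trans (hxw i hi1 hi2),
      fun i => (hη i).trans (hμ i).symm, ?_, ?_, ?_⟩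
    · rw [hηn, hq0]
      linear_combination (z.1 ⟨n - 2, (by omega : n - 2 < n)⟩ *
          θ ⟨0, (by omega : 0 < n - 2)⟩) * ha +
        (θ ⟨0, (by omega : 0 < n - 2)⟩ / 4 *
          (r.1 ⟨n - 2, (by omega : n - 2 < n - 1)⟩ -
            3 * q.1 ⟨n - 2, (by omega : n - 2 < n - 1)⟩ -
            2 * z.1 ⟨n - 1, (by omega : n - 1 < n)⟩)) * hb
    · rw [hμn, hq0]
      linear_combination (z.1 ⟨n - 2, (by omega : n - 2 < n)⟩ *
          θ ⟨0, (by omega : 0 < n - 2)⟩) * ha +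
        (θ ⟨0, (by omega : 0 < n - 2)⟩ / 4 *
          (q.1 ⟨n - 2, (by omega : n - 2 < n - 1)⟩ -
            3 * r.1 ⟨n - 2, (by omega : n - 2 < n - 1)⟩ -
            2 * z.1 ⟨n - 1, (by omega : n - 1 < n)⟩)) * hb
    · linear_combination (-1 : ℝ) * hph + hph' +
        (-(z.1 ⟨n - 2, (by omega : n - 2 < n)⟩ *
          (q.1 ⟨n - 2, (by omega : n - 2 < n - 1)⟩ -
            r.1 ⟨n - 2, (by omega : n - 2 < n - 1)⟩))) * ha +
        ((q.1 ⟨n - 2, (by omega : n - 2 < n - 1)⟩ -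
            r.1 ⟨n - 2, (by omega : n - 2 < n - 1)⟩) *
          (q.1 ⟨n - 2, (by omega : n - 2 < n - 1)⟩ +
            r.1 ⟨n - 2, (by omega : n - 2 < n - 1)⟩ +
            2 * z.1 ⟨n - 1, (by omega : n - 1 < n)⟩) / 4) * hb
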